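/- arXiv:2505.09072 — 3 statements merged into one kernel-verified Lean document; each statement's English description precedes it below -/
import Mathlib

section
/- For every S with 8/27 < S < 81/256 there exists ε > 0 such that for every γ ∈ (1, 1+ε) the polytropic van der Waals isentrope p(τ) = S/(τ−1)^γ − 1/τ² on (1, ∞) satisfies: (i) p'(τ) < 0 for all τ > 1; (ii) p has exactly two inflection points, i.e., there exist unique τ₁ⁱ and τ₂ⁱ with 1 < τ₁ⁱ < 4/(2−γ) < τ₂ⁱ such that p''(τ) > 0 for τ ∈ (1, τ₁ⁱ) ∪ (τ₂ⁱ, ∞) and p''(τ) < 0 for τ ∈ (τ₁ⁱ, τ₂ⁱ); and (iii) setting ϖ(τ) = −(4p'(τ) + τp''(τ))/(τp''(τ)), one has ϖ(τ) > 0 and ϖ'(τ) < 0 for all τ > τ₂ⁱ (Proposition 6.1 of the appendix). -/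
open Real Set

noncomputable def vdW (S γ : ℝ) : ℝ → ℝ := fun t => S / (t - 1) ^ γ - 1 / t ^ 2
noncomputable def P1 (S γ τ : ℝ) : ℝ := 2 / τ ^ 3 - S * γ / (τ - 1) ^ (γ + 1)
noncomputable def P2 (S γ τ : ℝ) : ℝ := S * γ * (γ + 1) / (τ - 1) ^ (γ + 2) - 6 / τ ^ 4
noncomputable def P3 (S γ τ : ℝ) : ℝ := 24 / τ ^ 5 - S * γ * (γ + 1) * (γ + 2) / (τ - 1) ^ (γ + 3)

lemma rpow_shift {x a : ℝ} (hx : 0 < x) : x ^ (a + 1) = x ^ a * x :=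
  Real.rpow_add_one hx.ne' a

lemma hasDerivAt_vdW (S γ : ℝ) {τ : ℝ} (hτ : 1 < τ) :
    HasDerivAt (vdW S γ) (P1 S γ τ) τ := by
  have hx : (0:ℝ) < τ - 1 := by linarith
  have hτ0 : (0:ℝ) < τ := by linarith
  have h1 : HasDerivAt (fun t : ℝ => (t - 1) ^ γ) (1 * γ * (τ - 1) ^ (γ - 1)) τ :=
    ((hasDerivAt_id τ).sub_const 1).rpow_const (Or.inl hx.ne')
  have hpow : ((τ - 1) ^ γ) ≠ 0 := by positivity
  have h2 : HasDerivAt (fun t : ℝ => S / (t - 1) ^ γ)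
      ((0 * (τ - 1) ^ γ - S * (1 * γ * (τ - 1) ^ (γ - 1))) / ((τ - 1) ^ γ) ^ 2) τ :=
    (hasDerivAt_const τ S).div h1 hpow
  have h3 : HasDerivAt (fun t : ℝ => 1 / t ^ 2)
      ((0 * τ ^ 2 - 1 * (2 * τ ^ 1)) / (τ ^ 2) ^ 2) τ :=
    (hasDerivAt_const τ 1).div (hasDerivAt_pow 2 τ) (by positivity)
  refine (h2.sub h3).congr_deriv (Eq.symm ?_)
  have key : (τ - 1) ^ (γ - 1) * (τ - 1) ^ (γ + 1) = (τ - 1) ^ γ * (τ - 1) ^ γ := by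
    rw [← Real.rpow_add hx, ← Real.rpow_add hx]; ring_nf
  have hpow1 : ((τ - 1) ^ (γ + 1)) ≠ 0 := by positivity
  unfold P1
  field_simp
  linear_combination (S * γ * τ ^ 3) * key

lemma hasDerivAt_inv_rpow (c e : ℝ) {τ : ℝ} (hτ : 1 < τ) :
    HasDerivAt (fun t : ℝ => c / (t - 1) ^ e) (-(c * e) / (τ - 1) ^ (e + 1)) τ := by
  have hx : (0:ℝ) < τ - 1 := by linarith
  have h1 : HasDerivAt (fun t : ℝ => (t - 1) ^ e) (1 * e * (τ - 1) ^ (e - 1)) τ :=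
    ((hasDerivAt_id τ).sub_const 1).rpow_const (Or.inl hx.ne')
  have hpow : ((τ - 1) ^ e) ≠ 0 := by positivity
  have h2 := (hasDerivAt_const τ c).div h1 hpow
  refine h2.congr_deriv (Eq.symm ?_)
  have key : (τ - 1) ^ (e - 1) * (τ - 1) ^ (e + 1) = (τ - 1) ^ e * (τ - 1) ^ e := by
    rw [← Real.rpow_add hx, ← Real.rpow_add hx]; ring_nf
  have hpow1 : ((τ - 1) ^ (e + 1)) ≠ 0 := by positivity
  field_simp
  linear_combination (c * e) * key

lemma hasDerivAt_inv_pow (c : ℝ) (n : ℕ) {τ : ℝ} (hτ : 1 < τ) :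
    HasDerivAt (fun t : ℝ => c / t ^ n) (-(c * n) / τ ^ (n + 1)) τ := by
  have hτ0 : (0:ℝ) < τ := by linarith
  cases n with
  | zero => simpa using hasDerivAt_const τ c
  | succ m =>
    have h2 := (hasDerivAt_const τ c).div (hasDerivAt_pow (m + 1) τ)
      (by positivity : τ ^ (m + 1) ≠ 0)
    refine h2.congr_deriv (Eq.symm ?_)
    simp only [Nat.add_sub_cancel]
    field_simp
    ring

lemma hasDerivAt_P1 (S γ : ℝ) {τ : ℝ} (hτ : 1 < τ) :
    HasDerivAt (P1 S γ) (P2 S γ τ) τ := by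
  have h1 := (hasDerivAt_inv_pow 2 3 hτ).sub (hasDerivAt_inv_rpow (S * γ) (γ + 1) hτ)
  refine h1.congr_deriv (Eq.symm ?_)
  unfold P2
  norm_num
  ring_nf

lemma hasDerivAt_P2 (S γ : ℝ) {τ : ℝ} (hτ : 1 < τ) :
    HasDerivAt (P2 S γ) (P3 S γ τ) τ := by
  have h1 := (hasDerivAt_inv_rpow (S * γ * (γ + 1)) (γ + 2) hτ).sub (hasDerivAt_inv_pow 6 4 hτ)
  refine h1.congr_deriv (Eq.symm ?_)
  unfold P3
  norm_num
  ring_nf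

lemma deriv_vdW (S γ : ℝ) {τ : ℝ} (hτ : 1 < τ) : deriv (vdW S γ) τ = P1 S γ τ :=
  (hasDerivAt_vdW S γ hτ).deriv

lemma deriv2_vdW (S γ : ℝ) {τ : ℝ} (hτ : 1 < τ) :
    deriv (deriv (vdW S γ)) τ = P2 S γ τ := by
  have h : deriv (vdW S γ) =ᶠ[nhds τ] P1 S γ := by
    filter_upwards [Ioi_mem_nhds hτ] with t ht
    exact deriv_vdW S γ ht
  rw [h.deriv_eq]
  exact (hasDerivAt_P1 S γ hτ).deriv

lemma hasDerivAt_F (S γ : ℝ) {τ : ℝ} (hτ : 1 < τ) :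
    HasDerivAt (fun t : ℝ => (t - 1) ^ (γ + 2) / t ^ 4)
      ((τ - 1) ^ (γ + 1) * (4 - (2 - γ) * τ) / τ ^ 5) τ := by
  have hx : (0:ℝ) < τ - 1 := by linarith
  have hτ0 : (0:ℝ) < τ := by linarith
  have h1 : HasDerivAt (fun t : ℝ => (t - 1) ^ (γ + 2)) (1 * (γ + 2) * (τ - 1) ^ (γ + 2 - 1)) τ :=
    ((hasDerivAt_id τ).sub_const 1).rpow_const (Or.inl hx.ne')
  have h2 := h1.div (hasDerivAt_pow 4 τ) (by positivity : τ ^ 4 ≠ 0)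
  refine h2.congr_deriv (Eq.symm ?_)
  have e1 : γ + 2 - 1 = γ + 1 := by ring
  have e2 : (τ - 1) ^ (γ + 2) = (τ - 1) ^ (γ + 1) * (τ - 1) := by
    rw [show γ + 2 = (γ + 1) + 1 by ring, rpow_shift hx]
  rw [e1, e2]
  field_simp
  ring


set_option maxHeartbeats 1000000 in
lemma lemma61_main1 (S γ ε δ : ℝ) (hl : 8 / 27 < S) (hδdef : δ = S - 8 / 27)
    (hεδ : ε ≤ δ / 4) (hε12 : ε ≤ 1 / 12) (hε0 : 0 < ε) (hγ1 : 1 < γ) (hγ2 : γ < 1 + ε) :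
    ∀ τ : ℝ, 1 < τ → 2 * (τ - 1) ^ (γ + 1) < S * γ * τ ^ 3 := by
  have hS0 : 0 < S := by linarith
  have hδ0 : 0 < δ := by rw [hδdef]; linarith
  have hγ12 : γ < 13 / 12 := by linarith
  have hb2 : (63:ℝ) ^ ε ≤ 1 + 12 * ε := by
    have h1 : (63:ℝ) ^ ε ≤ (64:ℝ) ^ ε :=
      Real.rpow_le_rpow (by norm_num) (by norm_num) hε0.le
    have h2 : (64:ℝ) ^ ε = (2:ℝ) ^ (6 * ε) := by
      rw [show (64:ℝ) = (2:ℝ) ^ ((6:ℕ):ℝ) by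
          rw [Real.rpow_natCast]; norm_num,
        ← Real.rpow_mul (by norm_num : (0:ℝ) ≤ 2)]
      norm_num
    have h3 : (2:ℝ) ^ (6 * ε) ≤ Real.exp (6 * ε) := by
      rw [Real.rpow_def_of_pos (by norm_num : (0:ℝ) < 2)]
      apply Real.exp_le_exp.mpr
      have hlog : Real.log 2 ≤ 1 := by
        have := Real.log_le_sub_one_of_pos (by norm_num : (0:ℝ) < 2)
        linarith
      nlinarith [mul_nonneg hε0.le (sub_nonneg.mpr hlog)]
    have hc6 : (0:ℝ) < 1 - 6 * ε := by linarith
    have ha : 1 - 6 * ε ≤ Real.exp (-(6 * ε)) := by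
      have := Real.add_one_le_exp (-(6 * ε)); linarith
    have hepos := Real.exp_pos (6 * ε)
    have hprod : Real.exp (6 * ε) * Real.exp (-(6 * ε)) = 1 := by
      rw [← Real.exp_add]; norm_num
    have hd : Real.exp (6 * ε) * (1 - 6 * ε) ≤ 1 := by
      calc Real.exp (6 * ε) * (1 - 6 * ε) ≤ Real.exp (6 * ε) * Real.exp (-(6 * ε)) :=
            mul_le_mul_of_nonneg_left ha hepos.le
        _ = 1 := hprod
    have he : Real.exp (6 * ε) ≤ 1 + 12 * ε := by nlinarith [hε12, hε0]
    linarith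
  intro τ hτ
  have hx : (0:ℝ) < τ - 1 := by linarith
  have hτ0 : (0:ℝ) < τ := by linarith
  rcases le_or_gt τ 64 with hc64 | hc64
  · have hsplit : (τ - 1) ^ (γ + 1) = (τ - 1) ^ (γ - 1) * (τ - 1) ^ 2 := by
      rw [show γ + 1 = (γ - 1) + ((2:ℕ):ℝ) by push_cast; ring, Real.rpow_add hx,
        Real.rpow_natCast]
    have hb1 : (τ - 1) ^ (γ - 1) ≤ (63:ℝ) ^ ε := by
      rcases le_or_gt (τ - 1) 1 with h | h
      · calc (τ - 1) ^ (γ - 1) ≤ 1 := Real.rpow_le_one hx.le h (by linarith)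
          _ ≤ (63:ℝ) ^ ε := Real.one_le_rpow (by norm_num) hε0.le
      · calc (τ - 1) ^ (γ - 1) ≤ (τ - 1) ^ ε :=
            Real.rpow_le_rpow_of_exponent_le h.le (by linarith)
          _ ≤ (63:ℝ) ^ ε := Real.rpow_le_rpow hx.le (by linarith) hε0.le
    have hY : (τ - 1) ^ (γ - 1) ≤ 1 + 3 * δ := by
      have : 12 * ε ≤ 3 * δ := by linarith
      linarith [hb1.trans hb2]
    have h0 : (0:ℝ) ≤ (τ - 1) ^ 2 := sq_nonneg _
    have h5 : (τ - 1) ^ (γ + 1) ≤ (1 + 3 * δ) * (τ - 1) ^ 2 := by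
      rw [hsplit]; exact mul_le_mul_of_nonneg_right hY h0
    have hq : 54 * (τ - 1) ^ 2 ≤ 8 * τ ^ 3 := by nlinarith [sq_nonneg (τ - 3), hx]
    have h6 : 2 * ((1 + 3 * δ) * (τ - 1) ^ 2) < S * τ ^ 3 := by
      nlinarith [mul_le_mul_of_nonneg_left hq (show (0:ℝ) ≤ 1 + 3 * δ by linarith),
        mul_pos hδ0 (pow_pos hτ0 3)]
    have h7 : S * τ ^ 3 ≤ S * γ * τ ^ 3 := by
      nlinarith [mul_nonneg (mul_nonneg hS0.le (show (0:ℝ) ≤ γ - 1 by linarith))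
        (pow_pos hτ0 3).le]
    linarith
  · have hXpos : (0:ℝ) < (τ - 1) ^ (γ + 1) := Real.rpow_pos_of_pos hx _
    have e1 : ((τ - 1) ^ (γ + 1)) ^ (2:ℕ) ≤ (τ - 1) ^ (5:ℕ) := by
      have ha : ((τ - 1) ^ (γ + 1)) ^ (2:ℕ) = (τ - 1) ^ ((γ + 1) * 2) := by
        rw [← Real.rpow_natCast ((τ - 1) ^ (γ + 1)) 2, ← Real.rpow_mul hx.le]
        norm_num
      have hbb : (τ - 1) ^ ((γ + 1) * 2) ≤ (τ - 1) ^ ((5:ℕ):ℝ) :=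
        Real.rpow_le_rpow_of_exponent_le (by linarith) (by push_cast; linarith)
      rw [Real.rpow_natCast] at hbb
      linarith [ha ▸ hbb]
    have e4 : 8 / 27 < S * γ := by nlinarith
    have hsq : (2 * (τ - 1) ^ (γ + 1)) ^ 2 < (S * γ * τ ^ 3) ^ 2 := by
      have e2 : (τ - 1) ^ 6 ≤ τ ^ 6 := pow_le_pow_left₀ hx.le (by linarith) 6
      have e3 : 63 * (τ - 1) ^ 5 ≤ (τ - 1) ^ 6 := by
        nlinarith [pow_pos hx 5, hc64]
      have e5 : (8:ℝ) / 27 * (8 / 27) < S * γ * (S * γ) :=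
        mul_self_lt_mul_self (by norm_num) e4
      have e6 : (64:ℝ) / 729 * τ ^ 6 ≤ (S * γ) ^ 2 * τ ^ 6 := by
        nlinarith [pow_pos hτ0 6, e5]
      nlinarith [e1, e2, e3, e6, pow_pos hx 5]
    have hpos : (0:ℝ) ≤ S * γ * τ ^ 3 := by positivity
    nlinarith [hsq, hXpos, hpos]

set_option maxHeartbeats 1000000 in
lemma lemma61_star (S γ ε ρ τ : ℝ) (hS0 : 0 < S) (hρdef : ρ = 1 - 256 * S / 81)
    (hρ0 : 0 < ρ) (hερ : ε ≤ ρ / 10) (hε12 : ε ≤ 1 / 12) (hε0 : 0 < ε)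
    (hγ1 : 1 < γ) (hγ2 : γ < 1 + ε) (hτ4 : 4 < τ) :
    S * γ * (γ + 1) * τ ^ 4 < (τ - 1) ^ (γ + 1) *
      (2 * (γ + 1) * (γ + 2) * τ ^ 2 - 14 * (γ + 1) * (τ - 1) * τ + 18 * (τ - 1) ^ 2) := by
  have hτ0 : (0:ℝ) < τ := by linarith
  have hx : (0:ℝ) < τ - 1 := by linarith
  have hXx2 : (τ - 1) ^ (2:ℕ) ≤ (τ - 1) ^ (γ + 1) := by
    have h := Real.rpow_le_rpow_of_exponent_le (show (1:ℝ) ≤ τ - 1 by linarith)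
      (show ((2:ℕ):ℝ) ≤ γ + 1 by push_cast; linarith)
    rwa [Real.rpow_natCast] at h
  have hg13 : (γ - 1) * (3 - γ) ≤ 2 * ε := by nlinarith
  have hRlow : (2 - 4 * ε) * τ ^ 2 - 8 * τ + 18 ≤
      2 * (γ + 1) * (γ + 2) * τ ^ 2 - 14 * (γ + 1) * (τ - 1) * τ + 18 * (τ - 1) ^ 2 := by
    nlinarith [mul_nonneg (show (0:ℝ) ≤ 2 * ε - (γ - 1) * (3 - γ) by linarith)
        (sq_nonneg τ),
      mul_nonneg (show (0:ℝ) ≤ γ - 1 by linarith) (show (0:ℝ) ≤ τ by linarith)]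
  have hR0pos : 0 < (2 - 4 * ε) * τ ^ 2 - 8 * τ + 18 := by
    nlinarith [sq_nonneg (5 * τ - 12), hε12, sq_nonneg τ]
  have hRpos : (0:ℝ) ≤ 2 * (γ + 1) * (γ + 2) * τ ^ 2 - 14 * (γ + 1) * (τ - 1) * τ +
      18 * (τ - 1) ^ 2 := by linarith
  have hpoly : 81 * (1 - ρ) * (2 + 4 * ε) * τ ^ 4 <
      256 * (τ - 1) ^ 2 * ((2 - 4 * ε) * τ ^ 2 - 8 * τ + 18) := by
    have hiden : 256 * (τ - 1) ^ 2 * ((2 - 4 * ε) * τ ^ 2 - 8 * τ + 18) -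
        81 * (1 - ρ) * (2 + 4 * ε) * τ ^ 4 =
        2 * (175 * (τ - 4) ^ 4 + 1264 * (τ - 4) ^ 3 + 2976 * (τ - 4) ^ 2 +
          2304 * (τ - 4)) + 1024 * (ε * (τ ^ 2 * (2 * τ - 1))) +
          162 * ((ρ - 10 * ε) * τ ^ 4) + 272 * (ε * τ ^ 4) + 324 * (ε * (ρ * τ ^ 4)) := by
      ring
    have t4 : (0:ℝ) ≤ τ - 4 := by linarith
    have t1 : (0:ℝ) ≤ (τ - 4) ^ 4 := by positivity
    have t2 : (0:ℝ) ≤ (τ - 4) ^ 3 := pow_nonneg t4 3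
    have t3 : (0:ℝ) ≤ (τ - 4) ^ 2 := by positivity
    have t5 : (0:ℝ) ≤ ε * (τ ^ 2 * (2 * τ - 1)) :=
      mul_nonneg hε0.le (mul_nonneg (sq_nonneg τ) (by linarith))
    have t6 : (0:ℝ) ≤ (ρ - 10 * ε) * τ ^ 4 :=
      mul_nonneg (by linarith) (by positivity)
    have t7 : (0:ℝ) < ε * τ ^ 4 := by positivity
    have t8 : (0:ℝ) ≤ ε * (ρ * τ ^ 4) := by positivity
    linarith
  have hgg2 : γ * (γ + 1) ≤ 2 + 4 * ε := by
    nlinarith [mul_lt_mul_of_pos_left hγ2 (show (0:ℝ) < γ by linarith),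
      mul_pos hε0 hε0, hε12]
  have c1 : S * γ * (γ + 1) * τ ^ 4 ≤ S * (2 + 4 * ε) * τ ^ 4 := by
    nlinarith [mul_nonneg (mul_nonneg hS0.le
      (show (0:ℝ) ≤ 2 + 4 * ε - γ * (γ + 1) by linarith)) (pow_pos hτ0 4).le]
  have hρS : 81 * (1 - ρ) = 256 * S := by rw [hρdef]; ring
  have c2 : 81 * (1 - ρ) * (2 + 4 * ε) * τ ^ 4 = 256 * (S * (2 + 4 * ε) * τ ^ 4) := by
    linear_combination ((2 + 4 * ε) * τ ^ 4) * hρS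
  have c3 : (τ - 1) ^ 2 * ((2 - 4 * ε) * τ ^ 2 - 8 * τ + 18) ≤
      (τ - 1) ^ 2 * (2 * (γ + 1) * (γ + 2) * τ ^ 2 - 14 * (γ + 1) * (τ - 1) * τ +
        18 * (τ - 1) ^ 2) := mul_le_mul_of_nonneg_left hRlow (sq_nonneg _)
  have c4 : (τ - 1) ^ 2 * (2 * (γ + 1) * (γ + 2) * τ ^ 2 - 14 * (γ + 1) * (τ - 1) * τ +
        18 * (τ - 1) ^ 2) ≤ (τ - 1) ^ (γ + 1) * (2 * (γ + 1) * (γ + 2) * τ ^ 2 -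
        14 * (γ + 1) * (τ - 1) * τ + 18 * (τ - 1) ^ 2) :=
    mul_le_mul_of_nonneg_right hXx2 hRpos
  linarith

set_option maxHeartbeats 1600000 in
theorem statement_17 (S : ℝ) (hl : 8 / 27 < S) (hu : S < 81 / 256) :
    ∃ ε : ℝ, 0 < ε ∧ ∀ γ : ℝ, 1 < γ → γ < 1 + ε →
      (∀ τ : ℝ, 1 < τ → deriv (fun t : ℝ => S / (t - 1) ^ γ - 1 / t ^ 2) τ < 0) ∧
      ∃ τ1 τ2 : ℝ,
        (1 < τ1 ∧ τ1 < 4 / (2 - γ) ∧ 4 / (2 - γ) < τ2 ∧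
          (∀ τ ∈ Set.Ioo 1 τ1,
            0 < deriv (deriv (fun t : ℝ => S / (t - 1) ^ γ - 1 / t ^ 2)) τ) ∧
          (∀ τ : ℝ, τ2 < τ →
            0 < deriv (deriv (fun t : ℝ => S / (t - 1) ^ γ - 1 / t ^ 2)) τ) ∧
          (∀ τ ∈ Set.Ioo τ1 τ2,
            deriv (deriv (fun t : ℝ => S / (t - 1) ^ γ - 1 / t ^ 2)) τ < 0)) ∧
        (∀ σ1 σ2 : ℝ,
          (1 < σ1 ∧ σ1 < 4 / (2 - γ) ∧ 4 / (2 - γ) < σ2 ∧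
            (∀ τ ∈ Set.Ioo 1 σ1,
              0 < deriv (deriv (fun t : ℝ => S / (t - 1) ^ γ - 1 / t ^ 2)) τ) ∧
            (∀ τ : ℝ, σ2 < τ →
              0 < deriv (deriv (fun t : ℝ => S / (t - 1) ^ γ - 1 / t ^ 2)) τ) ∧
            (∀ τ ∈ Set.Ioo σ1 σ2,
              deriv (deriv (fun t : ℝ => S / (t - 1) ^ γ - 1 / t ^ 2)) τ < 0)) →
          σ1 = τ1 ∧ σ2 = τ2) ∧
        (∀ τ : ℝ, τ2 < τ →
          0 < -(4 * deriv (fun t : ℝ => S / (t - 1) ^ γ - 1 / t ^ 2) τ +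
                τ * deriv (deriv (fun t : ℝ => S / (t - 1) ^ γ - 1 / t ^ 2)) τ) /
              (τ * deriv (deriv (fun t : ℝ => S / (t - 1) ^ γ - 1 / t ^ 2)) τ) ∧
          deriv (fun σ : ℝ =>
            -(4 * deriv (fun t : ℝ => S / (t - 1) ^ γ - 1 / t ^ 2) σ +
              σ * deriv (deriv (fun t : ℝ => S / (t - 1) ^ γ - 1 / t ^ 2)) σ) /
            (σ * deriv (deriv (fun t : ℝ => S / (t - 1) ^ γ - 1 / t ^ 2)) σ)) τ < 0) := by
  have hS0 : 0 < S := by linarith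
  set δ : ℝ := S - 8 / 27 with hδdef
  set ρ : ℝ := 1 - 256 * S / 81 with hρdef
  have hδ0 : 0 < δ := by simp only [hδdef]; linarith
  have hρ0 : 0 < ρ := by simp only [hρdef]; nlinarith
  refine ⟨min (δ / 4) (min (ρ / 10) (1 / 12)), by positivity, ?_⟩
  set ε : ℝ := min (δ / 4) (min (ρ / 10) (1 / 12)) with hεdef
  have hεδ : ε ≤ δ / 4 := min_le_left _ _
  have hερ : ε ≤ ρ / 10 := le_trans (min_le_right _ _) (min_le_left _ _)
  have hε12 : ε ≤ 1 / 12 := le_trans (min_le_right _ _) (min_le_right _ _)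
  have hε0 : 0 < ε := by positivity
  clear_value δ ρ ε
  intro γ hγ1 hγ2
  have hγ12 : γ < 13 / 12 := by linarith
  have h2γ : 0 < 2 - γ := by linarith
  set m : ℝ := 4 / (2 - γ) with hmdef
  have hm4 : 4 < m := by
    rw [hmdef, lt_div_iff₀ h2γ]; nlinarith
  have hm8 : m < 8 := by
    rw [hmdef, div_lt_iff₀ h2γ]; nlinarith
  -- Part (i) core estimate
  have main1 := lemma61_main1 S γ ε δ hl hδdef hεδ hε12 hε0 hγ1 hγ2
  have part1 : ∀ τ : ℝ, 1 < τ → deriv (fun t : ℝ => S / (t - 1) ^ γ - 1 / t ^ 2) τ < 0 := by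
    intro τ hτ
    have hx : (0:ℝ) < τ - 1 := by linarith
    have hτ0 : (0:ℝ) < τ := by linarith
    have := main1 τ hτ
    show deriv (vdW S γ) τ < 0
    rw [deriv_vdW S γ hτ]
    unfold P1
    rw [sub_neg, div_lt_div_iff₀ (by positivity) (by positivity)]
    nlinarith
  refine ⟨part1, ?_⟩
  -- the unimodal function F
  set F : ℝ → ℝ := fun t => (t - 1) ^ (γ + 2) / t ^ 4 with hFdef
  set c : ℝ := S * γ * (γ + 1) / 6 with hcdef
  have hFc : ∀ τ : ℝ, 1 < τ → ContinuousAt F τ := fun τ hτ =>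
    (hasDerivAt_F S γ hτ).continuousAt
  have hFd : ∀ τ : ℝ, 1 < τ →
      deriv F τ = (τ - 1) ^ (γ + 1) * (4 - (2 - γ) * τ) / τ ^ 5 := fun τ hτ =>
    (hasDerivAt_F S γ hτ).deriv
  have hFmono : StrictMonoOn F (Set.Ioc 1 m) := by
    apply strictMonoOn_of_deriv_pos (convex_Ioc 1 m)
      (fun t ht => (hFc t ht.1).continuousWithinAt)
    intro t ht
    rw [interior_Ioc] at ht
    rw [hFd t ht.1]
    have hx : (0:ℝ) < t - 1 := by linarith [ht.1]
    have h4 : 0 < 4 - (2 - γ) * t := by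
      have := ht.2
      rw [hmdef, lt_div_iff₀ h2γ] at this
      nlinarith
    exact div_pos (mul_pos (Real.rpow_pos_of_pos hx _) h4) (pow_pos (by linarith [ht.1]) 5)
  have hFanti : StrictAntiOn F (Set.Ici m) := by
    apply strictAntiOn_of_deriv_neg (convex_Ici m)
      (fun t ht => (hFc t (by simp only [Set.mem_Ici] at ht; linarith)).continuousWithinAt)
    intro t ht
    rw [interior_Ici] at ht
    have htm : m < t := ht
    have ht1 : (1:ℝ) < t := by linarith
    rw [hFd t ht1]
    have hx : (0:ℝ) < t - 1 := by linarith
    have h4 : 4 - (2 - γ) * t < 0 := by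
      rw [hmdef, div_lt_iff₀ h2γ] at htm
      nlinarith
    have hX : (0:ℝ) < (t - 1) ^ (γ + 1) := Real.rpow_pos_of_pos hx _
    have : (t - 1) ^ (γ + 1) * (4 - (2 - γ) * t) < 0 := mul_neg_of_pos_of_neg hX h4
    exact div_neg_of_neg_of_pos this (pow_pos (by linarith) 5)

  have hc8 : 8 / 81 < c := by
    have h2g : 2 < γ * (γ + 1) := by nlinarith
    have h3 := mul_lt_mul_of_pos_left h2g hS0
    rw [hcdef]; nlinarith
  have hcm : c < F m := by
    have h33 : (3:ℝ) ^ ((3:ℕ):ℝ) = 27 := by rw [Real.rpow_natCast]; norm_num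
    have h3g : (27:ℝ) ≤ (3:ℝ) ^ (γ + 2) := by
      rw [← h33]
      exact Real.rpow_le_rpow_of_exponent_le (by norm_num) (by push_cast; linarith)
    have hF4 : (27:ℝ) / 256 ≤ F 4 := by
      have : F 4 = (3:ℝ) ^ (γ + 2) / 256 := by
        simp only [hFdef]; norm_num
      rw [this]
      linarith [h3g]
    have hF4m : F 4 < F m := hFmono ⟨by norm_num, hm4.le⟩ ⟨by linarith, le_refl m⟩ hm4
    have hgg : γ * (γ + 1) < 2 + 4 * ε := by
      nlinarith [mul_lt_mul_of_pos_left hγ2 (show (0:ℝ) < γ by linarith),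
        mul_pos hε0 hε0, hε12]
    have h1 : S * (γ * (γ + 1)) < S * (2 + 4 * ε) := mul_lt_mul_of_pos_left hgg hS0
    have h2 : S * ε ≤ S * (ρ / 10) := mul_le_mul_of_nonneg_left hερ hS0.le
    have h3 : S * ρ ≤ 81 / 256 * ρ := mul_le_mul_of_nonneg_right hu.le hρ0.le
    have hcq : c < 27 / 256 := by
      rw [hcdef]
      nlinarith [hρ0, hS0]
    linarith
  have hlow : F (101 / 100) < c := by
    have h1 : ((1:ℝ) / 100) ^ (γ + 2) ≤ ((1:ℝ) / 100) ^ ((3:ℕ):ℝ) :=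
      Real.rpow_le_rpow_of_exponent_ge (by norm_num) (by norm_num) (by push_cast; linarith)
    have h2 : ((1:ℝ) / 100) ^ ((3:ℕ):ℝ) = 1 / 1000000 := by
      rw [Real.rpow_natCast]; norm_num
    have h3 : F (101 / 100) = ((1:ℝ) / 100) ^ (γ + 2) / (101 / 100 : ℝ) ^ 4 := by
      simp only [hFdef]; norm_num
    have h4 : F (101 / 100) ≤ ((1:ℝ) / 100) ^ (γ + 2) := by
      rw [h3]
      apply div_le_self (Real.rpow_nonneg (by norm_num) _) (by norm_num)
    have : F (101 / 100) ≤ 1 / 1000000 := by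
      rw [← h2]; exact h4.trans h1
    linarith [hc8]
  have hhigh : F 200 < c := by
    have h1 : (199:ℝ) ^ (γ + 2) ≤ (200:ℝ) ^ (γ + 2) :=
      Real.rpow_le_rpow (by norm_num) (by norm_num) (by linarith)
    have h2 : (200:ℝ) ^ (γ + 2) = (200:ℝ) ^ (γ - 1) * (200:ℝ) ^ ((3:ℕ):ℝ) := by
      rw [← Real.rpow_add (by norm_num : (0:ℝ) < 200)]
      push_cast
      ring_nf
    have h3 : (200:ℝ) ^ (γ - 1) ≤ (200:ℝ) ^ ((1:ℝ)/2) :=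
      Real.rpow_le_rpow_of_exponent_le (by norm_num) (by linarith)
    have h4 : (200:ℝ) ^ ((1:ℝ)/2) ≤ 15 := by
      rw [← Real.sqrt_eq_rpow]
      have : (15:ℝ) = Real.sqrt 225 := by
        rw [show (225:ℝ) = 15 ^ 2 by norm_num, Real.sqrt_sq (by norm_num : (0:ℝ) ≤ 15)]
      rw [this]
      exact Real.sqrt_le_sqrt (by norm_num)
    have h5 : (200:ℝ) ^ ((3:ℕ):ℝ) = 8000000 := by rw [Real.rpow_natCast]; norm_num
    have h6 : (200:ℝ) ^ (γ + 2) ≤ 120000000 := by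
      rw [h2, h5]
      nlinarith [Real.rpow_nonneg (show (0:ℝ) ≤ 200 by norm_num) (γ - 1), h3, h4]
    have h7 : F 200 = (199:ℝ) ^ (γ + 2) / 200 ^ 4 := by
      simp only [hFdef]; norm_num
    have : F 200 ≤ 120000000 / 200 ^ 4 := by
      rw [h7]
      apply div_le_div_of_nonneg_right ?_ (by norm_num)
      · linarith [h1]
    have h8 : (120000000:ℝ) / 200 ^ 4 = 3 / 40 := by norm_num
    rw [h8] at this
    linarith [hc8]
  -- get τ1 and τ2 by IVT
  obtain ⟨τ1, hτ1mem, hτ1c⟩ : ∃ τ1 ∈ Set.Icc (101 / 100 : ℝ) m, F τ1 = c := by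
    have h := intermediate_value_Icc (by linarith : (101 / 100 : ℝ) ≤ m)
      (fun t ht => (hFc t (by linarith [ht.1] : (1:ℝ) < t)).continuousWithinAt)
    have : c ∈ Set.Icc (F (101 / 100)) (F m) := ⟨hlow.le, hcm.le⟩
    obtain ⟨τ1, h1, h2⟩ := h this
    exact ⟨τ1, h1, h2⟩
  obtain ⟨τ2, hτ2mem, hτ2c⟩ : ∃ τ2 ∈ Set.Icc m 200, F τ2 = c := by
    have h := intermediate_value_Icc' (by linarith : m ≤ (200:ℝ))
      (fun t ht => (hFc t (by linarith [ht.1] : (1:ℝ) < t)).continuousWithinAt)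
    have : c ∈ Set.Icc (F 200) (F m) := ⟨hhigh.le, hcm.le⟩
    obtain ⟨τ2, h1, h2⟩ := h this
    exact ⟨τ2, h1, h2⟩
  have hτ11 : 1 < τ1 := by linarith [hτ1mem.1]
  have hτ1m : τ1 < m := lt_of_le_of_ne hτ1mem.2 (fun h => by rw [h] at hτ1c; linarith)
  have hmτ2 : m < τ2 := lt_of_le_of_ne hτ2mem.1 (fun h => by rw [← h] at hτ2c; linarith)
  -- sign lemmas
  have hP2pos : ∀ τ : ℝ, 1 < τ → F τ < c → 0 < P2 S γ τ := by
    intro τ hτ hFτ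
    have hx : (0:ℝ) < τ - 1 := by linarith
    have hτ0 : (0:ℝ) < τ := by linarith
    rw [hFdef] at hFτ
    simp only [hcdef] at hFτ
    rw [div_lt_div_iff₀ (by positivity) (by norm_num)] at hFτ
    unfold P2
    rw [sub_pos, div_lt_div_iff₀ (by positivity) (by positivity)]
    nlinarith
  have hP2neg : ∀ τ : ℝ, 1 < τ → c < F τ → P2 S γ τ < 0 := by
    intro τ hτ hFτ
    have hx : (0:ℝ) < τ - 1 := by linarith
    have hτ0 : (0:ℝ) < τ := by linarith
    rw [hFdef] at hFτ
    simp only [hcdef] at hFτ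
    rw [div_lt_div_iff₀ (by norm_num) (by positivity)] at hFτ
    unfold P2
    rw [sub_neg, div_lt_div_iff₀ (by positivity) (by positivity)]
    nlinarith
  -- assemble
  clear_value F c m
  clear part1 main1 hFc hFd hc8 hcm hlow hhigh
  have hτ21 : 1 < τ2 := by linarith
  refine ⟨τ1, τ2, ⟨hτ11, hτ1m, hmτ2, ?_, ?_, ?_⟩, ?_, ?_⟩
  · intro τ hτ
    have h1 : (1:ℝ) < τ := hτ.1
    show 0 < deriv (deriv (vdW S γ)) τ
    rw [deriv2_vdW S γ h1]
    apply hP2pos τ h1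
    have : F τ < F τ1 := hFmono ⟨h1, by linarith [hτ.2, hτ1m]⟩ ⟨hτ11, hτ1m.le⟩ hτ.2
    linarith [hτ1c ▸ this]
  · intro τ hτ
    have h1 : (1:ℝ) < τ := by linarith [hm4, hmτ2]
    show 0 < deriv (deriv (vdW S γ)) τ
    rw [deriv2_vdW S γ h1]
    apply hP2pos τ h1
    have : F τ < F τ2 := hFanti hτ2mem.1 (by simp only [Set.mem_Ici]; linarith [hmτ2] :
      τ ∈ Set.Ici m) hτ
    linarith [hτ2c ▸ this]
  · intro τ hτ
    have h1 : (1:ℝ) < τ := by linarith [hτ.1, hτ11]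
    show deriv (deriv (vdW S γ)) τ < 0
    rw [deriv2_vdW S γ h1]
    apply hP2neg τ h1
    rcases le_or_gt τ m with hcase | hcase
    · have : F τ1 < F τ := hFmono ⟨hτ11, hτ1m.le⟩ ⟨h1, hcase⟩ hτ.1
      linarith [hτ1c ▸ this]
    · have : F τ2 < F τ := hFanti (by simp only [Set.mem_Ici]; linarith : τ ∈ Set.Ici m)
        hτ2mem.1 hτ.2
      linarith [hτ2c ▸ this]
  · -- uniqueness
    rintro σ1 σ2 ⟨hσ11, hσ1m, hmσ2, hA, hB, hC⟩
    have hσ1τ1 : σ1 = τ1 := by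
      by_contra hne
      rcases lt_or_gt_of_ne hne with h | h
      · have ht1 : 0 < deriv (deriv (fun t : ℝ => S / (t - 1) ^ γ - 1 / t ^ 2)) ((σ1 + τ1) / 2) := by
          have hmem : (σ1 + τ1) / 2 ∈ Set.Ioo 1 τ1 := ⟨by linarith, by linarith⟩
          show 0 < deriv (deriv (fun t : ℝ => S / (t - 1) ^ γ - 1 / t ^ 2)) ((σ1 + τ1) / 2)
          have h1 : (1:ℝ) < (σ1 + τ1) / 2 := hmem.1
          show 0 < deriv (deriv (vdW S γ)) ((σ1 + τ1) / 2)
          rw [deriv2_vdW S γ h1]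
          apply hP2pos _ h1
          have : F ((σ1 + τ1) / 2) < F τ1 :=
            hFmono ⟨h1, by linarith⟩ ⟨hτ11, hτ1m.le⟩ hmem.2
          linarith [hτ1c ▸ this]
        have ht2 := hC ((σ1 + τ1) / 2) ⟨by linarith, by linarith⟩
        linarith
      · have ht1 := hA ((τ1 + σ1) / 2) ⟨by linarith, by linarith⟩
        have ht2 : deriv (deriv (fun t : ℝ => S / (t - 1) ^ γ - 1 / t ^ 2)) ((τ1 + σ1) / 2) < 0 := by
          have h1 : (1:ℝ) < (τ1 + σ1) / 2 := by linarith
          show deriv (deriv (vdW S γ)) ((τ1 + σ1) / 2) < 0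
          rw [deriv2_vdW S γ h1]
          apply hP2neg _ h1
          have : F τ1 < F ((τ1 + σ1) / 2) :=
            hFmono ⟨hτ11, hτ1m.le⟩ ⟨h1, by linarith⟩ (by linarith)
          linarith [hτ1c ▸ this]
        linarith
    refine ⟨hσ1τ1, ?_⟩
    by_contra hne
    rcases lt_or_gt_of_ne hne with h | h
    · have ht1 := hB ((σ2 + τ2) / 2) (by linarith)
      have ht2 : deriv (deriv (fun t : ℝ => S / (t - 1) ^ γ - 1 / t ^ 2)) ((σ2 + τ2) / 2) < 0 := by
        have h1 : (1:ℝ) < (σ2 + τ2) / 2 := by linarith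
        show deriv (deriv (vdW S γ)) ((σ2 + τ2) / 2) < 0
        rw [deriv2_vdW S γ h1]
        apply hP2neg _ h1
        have : F τ2 < F ((σ2 + τ2) / 2) :=
          hFanti (by simp only [Set.mem_Ici]; linarith : (σ2 + τ2) / 2 ∈ Set.Ici m)
            hτ2mem.1 (by linarith)
        linarith [hτ2c ▸ this]
      linarith
    · have ht2 := hC ((τ2 + σ2) / 2) ⟨by linarith, by linarith⟩
      have ht1 : 0 < deriv (deriv (fun t : ℝ => S / (t - 1) ^ γ - 1 / t ^ 2)) ((τ2 + σ2) / 2) := by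
        have h1 : (1:ℝ) < (τ2 + σ2) / 2 := by linarith
        show 0 < deriv (deriv (vdW S γ)) ((τ2 + σ2) / 2)
        rw [deriv2_vdW S γ h1]
        apply hP2pos _ h1
        have : F ((τ2 + σ2) / 2) < F τ2 :=
          hFanti hτ2mem.1
            (by simp only [Set.mem_Ici]; linarith : (τ2 + σ2) / 2 ∈ Set.Ici m) (by linarith)
        linarith [hτ2c ▸ this]
      linarith
  · -- part (iii)
    intro τ hττ2
    have hτm : m < τ := lt_trans hmτ2 hττ2
    have hτ4 : (4:ℝ) < τ := lt_trans hm4 hτm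
    have h1 : (1:ℝ) < τ := by linarith
    have hx : (0:ℝ) < τ - 1 := by linarith
    have hτ0 : (0:ℝ) < τ := by linarith
    have hX : (0:ℝ) < (τ - 1) ^ (γ + 1) := Real.rpow_pos_of_pos hx _
    have hFτ : F τ < c := by
      have : F τ < F τ2 := hFanti hτ2mem.1
        (by simp only [Set.mem_Ici]; linarith : τ ∈ Set.Ici m) hττ2
      linarith [hτ2c ▸ this]
    have hp2 : 0 < P2 S γ τ := hP2pos τ h1 hFτ
    have e2 : (τ - 1) ^ (γ + 2) = (τ - 1) ^ (γ + 1) * (τ - 1) := by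
      rw [show γ + 2 = (γ + 1) + 1 by ring, rpow_shift hx]
    have e3 : (τ - 1) ^ (γ + 3) = (τ - 1) ^ (γ + 1) * (τ - 1) ^ 2 := by
      rw [show γ + 3 = (γ + 1) + ((2:ℕ):ℝ) by push_cast; ring, Real.rpow_add hx,
        Real.rpow_natCast]
    have hkey0 : 6 * ((τ - 1) * (τ - 1) ^ (γ + 1)) < S * γ * (γ + 1) * τ ^ 4 := by
      have h := hFτ
      simp only [hFdef, hcdef] at h
      rw [div_lt_div_iff₀ (by positivity) (by norm_num)] at h
      rw [e2] at h
      nlinarith [h]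
    have hm' : (4:ℝ) < (2 - γ) * τ := by
      rw [hmdef, div_lt_iff₀ h2γ] at hτm; linarith
    have hnum : 4 * P1 S γ τ + τ * P2 S γ τ < 0 := by
      have hstep : 2 * ((τ - 1) * (τ - 1) ^ (γ + 1)) < S * γ * τ ^ 3 * ((3 - γ) * τ - 4) := by
        nlinarith [hkey0,
          mul_pos (mul_pos (mul_pos hS0 (show (0:ℝ) < γ by linarith)) (pow_pos hτ0 3))
            (show (0:ℝ) < (2 - γ) * τ - 4 by linarith)]
      have hid : 4 * P1 S γ τ + τ * P2 S γ τ =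
          (2 * ((τ - 1) * (τ - 1) ^ (γ + 1)) - S * γ * τ ^ 3 * ((3 - γ) * τ - 4)) /
            (((τ - 1) * (τ - 1) ^ (γ + 1)) * τ ^ 3) := by
        unfold P1 P2
        rw [e2]
        field_simp
        ring
      rw [hid]
      apply div_neg_of_neg_of_pos (by linarith) (by positivity)
    constructor
    · show 0 < -(4 * deriv (vdW S γ) τ + τ * deriv (deriv (vdW S γ)) τ) /
          (τ * deriv (deriv (vdW S γ)) τ)
      rw [deriv_vdW S γ h1, deriv2_vdW S γ h1]
      exact div_pos (by linarith) (mul_pos hτ0 hp2)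
    · -- the star inequality
      have hstar := lemma61_star S γ ε ρ τ hS0 hρdef hρ0 hερ hε12 hε0 hγ1 hγ2 hτ4
      have hE : P1 S γ τ * P2 S γ τ - τ * P2 S γ τ ^ 2 + τ * P1 S γ τ * P3 S γ τ < 0 := by
        have hEeq : P1 S γ τ * P2 S γ τ - τ * P2 S γ τ ^ 2 + τ * P1 S γ τ * P3 S γ τ =
            (S * γ * (S * γ * (γ + 1) * τ ^ 4 - (τ - 1) ^ (γ + 1) *
              (2 * (γ + 1) * (γ + 2) * τ ^ 2 - 14 * (γ + 1) * (τ - 1) * τ +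
                18 * (τ - 1) ^ 2))) /
            ((((τ - 1) ^ (γ + 1)) ^ 2 * (τ - 1) ^ 2) * τ ^ 4) := by
          rw [eq_div_iff (by positivity)]
          unfold P1 P2 P3
          rw [e2, e3]
          field_simp
          ring
        rw [hEeq]
        apply div_neg_of_neg_of_pos ?_ (by positivity)
        have hSγ : (0:ℝ) < S * γ := mul_pos hS0 (by linarith)
        nlinarith [mul_pos hSγ (show (0:ℝ) < (τ - 1) ^ (γ + 1) *
          (2 * (γ + 1) * (γ + 2) * τ ^ 2 - 14 * (γ + 1) * (τ - 1) * τ + 18 * (τ - 1) ^ 2) -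
            S * γ * (γ + 1) * τ ^ 4 by linarith)]
      show deriv (fun σ : ℝ =>
          -(4 * deriv (vdW S γ) σ + σ * deriv (deriv (vdW S γ)) σ) /
            (σ * deriv (deriv (vdW S γ)) σ)) τ < 0
      have hev : (fun σ : ℝ =>
          -(4 * deriv (vdW S γ) σ + σ * deriv (deriv (vdW S γ)) σ) /
            (σ * deriv (deriv (vdW S γ)) σ)) =ᶠ[nhds τ]
          (fun σ : ℝ => -(4 * P1 S γ σ + σ * P2 S γ σ) / (σ * P2 S γ σ)) := by
        filter_upwards [Ioi_mem_nhds h1] with σ hσ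
        rw [deriv_vdW S γ hσ, deriv2_vdW S γ hσ]
      rw [hev.deriv_eq]
      have hN : HasDerivAt (fun σ : ℝ => -(4 * P1 S γ σ + σ * P2 S γ σ))
          (-(4 * P2 S γ τ + (1 * P2 S γ τ + τ * P3 S γ τ))) τ :=
        (((hasDerivAt_P1 S γ h1).const_mul 4).add
          ((hasDerivAt_id τ).mul (hasDerivAt_P2 S γ h1))).neg
      have hD : HasDerivAt (fun σ : ℝ => σ * P2 S γ σ) (1 * P2 S γ τ + τ * P3 S γ τ) τ :=
        (hasDerivAt_id τ).mul (hasDerivAt_P2 S γ h1)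
      have hD0 : τ * P2 S γ τ ≠ 0 := (mul_pos hτ0 hp2).ne'
      have hder : HasDerivAt (fun σ : ℝ => -(4 * P1 S γ σ + σ * P2 S γ σ) / (σ * P2 S γ σ)) _ τ :=
        hN.div hD hD0
      rw [hder.deriv]
      apply div_neg_of_neg_of_pos ?_ (pow_pos (mul_pos hτ0 hp2) 2)
      have hring : -(4 * P2 S γ τ + (1 * P2 S γ τ + τ * P3 S γ τ)) * (τ * P2 S γ τ) -
          -(4 * P1 S γ τ + τ * P2 S γ τ) * (1 * P2 S γ τ + τ * P3 S γ τ) =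
          4 * (P1 S γ τ * P2 S γ τ - τ * P2 S γ τ ^ 2 + τ * P1 S γ τ * P3 S γ τ) := by
        ring
      rw [hring]
      linarith
end

section
/- For every twice continuously differentiable function f : Ω → ℝ, at every point of Ω the commutator relation ∂₋∂₊f − ∂₊∂₋f = (1/sin(2A))·[(cos(2A)·∂₊β − ∂₋α)·∂₋f − (∂₊β − cos(2A)·∂₋α)·∂₊f] holds (Proposition 2.1, commutator relation between the characteristic directional derivatives). -/
/-- Directional derivative of `g` along the unit direction with inclination angle `θ z`,
i.e. `cos (θ z) ∂g/∂ξ + sin (θ z) ∂g/∂η`. -/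
noncomputable def dirDeriv (θ g : ℝ × ℝ → ℝ) : ℝ × ℝ → ℝ :=
  fun z => Real.cos (θ z) * fderiv ℝ g z (1, 0) + Real.sin (θ z) * fderiv ℝ g z (0, 1)

lemma dirDeriv_hasFDerivAt (θ f : ℝ × ℝ → ℝ) (z : ℝ × ℝ)
    (hθ : DifferentiableAt ℝ θ z) (hf : ContDiffAt ℝ 2 f z) :
    HasFDerivAt (dirDeriv θ f)
      ((Real.cos (θ z) • ((ContinuousLinearMap.apply ℝ ℝ ((1,0) : ℝ × ℝ)).comp
          (fderiv ℝ (fderiv ℝ f) z))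
        + fderiv ℝ f z (1,0) • (-Real.sin (θ z) • fderiv ℝ θ z))
       + (Real.sin (θ z) • ((ContinuousLinearMap.apply ℝ ℝ ((0,1) : ℝ × ℝ)).comp
          (fderiv ℝ (fderiv ℝ f) z))
        + fderiv ℝ f z (0,1) • (Real.cos (θ z) • fderiv ℝ θ z))) z := by
  have hθ' : HasFDerivAt θ (fderiv ℝ θ z) z := hθ.hasFDerivAt
  have hF : HasFDerivAt (fderiv ℝ f) (fderiv ℝ (fderiv ℝ f) z) z :=
    ((hf.fderiv_right (m := 1) (by norm_num)).differentiableAt one_ne_zero).hasFDerivAt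
  have h1 : HasFDerivAt (fun w => fderiv ℝ f w (1,0))
      ((ContinuousLinearMap.apply ℝ ℝ ((1,0) : ℝ × ℝ)).comp (fderiv ℝ (fderiv ℝ f) z)) z :=
    ((ContinuousLinearMap.apply ℝ ℝ ((1,0) : ℝ × ℝ)).hasFDerivAt).comp z hF
  have h2 : HasFDerivAt (fun w => fderiv ℝ f w (0,1))
      ((ContinuousLinearMap.apply ℝ ℝ ((0,1) : ℝ × ℝ)).comp (fderiv ℝ (fderiv ℝ f) z)) z :=
    ((ContinuousLinearMap.apply ℝ ℝ ((0,1) : ℝ × ℝ)).hasFDerivAt).comp z hF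
  exact (hθ'.cos.mul h1).add (hθ'.sin.mul h2)

theorem statement_18 (Ω : Set (ℝ × ℝ)) (hΩ : IsOpen Ω)
    (α β : ℝ × ℝ → ℝ)
    (hα : ContDiffOn ℝ 1 α Ω) (hβ : ContDiffOn ℝ 1 β Ω)
    (hsin : ∀ z ∈ Ω, Real.sin (α z - β z) ≠ 0)
    (f : ℝ × ℝ → ℝ) (hf : ContDiffOn ℝ 2 f Ω) :
    ∀ z ∈ Ω,
      dirDeriv β (dirDeriv α f) z - dirDeriv α (dirDeriv β f) z =
        (1 / Real.sin (2 * ((α z - β z) / 2))) *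
          ((Real.cos (2 * ((α z - β z) / 2)) * dirDeriv α β z - dirDeriv β α z) *
              dirDeriv β f z -
            (dirDeriv α β z - Real.cos (2 * ((α z - β z) / 2)) * dirDeriv β α z) *
              dirDeriv α f z) := by
  intro z hz
  have hmem := hΩ.mem_nhds hz
  have hfz : ContDiffAt ℝ 2 f z := hf.contDiffAt hmem
  have hαz : DifferentiableAt ℝ α z := (hα.contDiffAt hmem).differentiableAt one_ne_zero
  have hβz : DifferentiableAt ℝ β z := (hβ.contDiffAt hmem).differentiableAt one_ne_zero
  have LA := dirDeriv_hasFDerivAt α f z hαz hfz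
  have LB := dirDeriv_hasFDerivAt β f z hβz hfz
  have hsym := (hfz.isSymmSndFDerivAt (by simp)) ((1,0) : ℝ × ℝ) ((0,1) : ℝ × ℝ)
  have EA : dirDeriv β (dirDeriv α f) z
      = Real.cos (β z) * (fderiv ℝ (dirDeriv α f) z (1,0))
        + Real.sin (β z) * (fderiv ℝ (dirDeriv α f) z (0,1)) := rfl
  have EB : dirDeriv α (dirDeriv β f) z
      = Real.cos (α z) * (fderiv ℝ (dirDeriv β f) z (1,0))
        + Real.sin (α z) * (fderiv ℝ (dirDeriv β f) z (0,1)) := rfl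
  rw [EA, EB, LA.fderiv, LB.fderiv]
  simp only [dirDeriv, ContinuousLinearMap.add_apply, ContinuousLinearMap.smul_apply,
    ContinuousLinearMap.coe_comp', Function.comp_apply, ContinuousLinearMap.apply_apply,
    ContinuousLinearMap.neg_apply, smul_eq_mul, neg_smul, neg_mul]
  rw [show (2:ℝ) * ((α z - β z)/2) = α z - β z by ring, Real.sin_sub, Real.cos_sub]
  rw [hsym]
  have hs : Real.sin (α z) * Real.cos (β z) - Real.cos (α z) * Real.sin (β z) ≠ 0 := by
    have h := hsin z hz; rwa [Real.sin_sub] at h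
  have pA := Real.sin_sq_add_cos_sq (α z)
  have pB := Real.sin_sq_add_cos_sq (β z)
  rw [one_div_mul_eq_div, eq_div_iff hs]
  set sa := Real.sin (α z)
  set ca := Real.cos (α z)
  set sb := Real.sin (β z)
  set cb := Real.cos (β z)
  set a1 := (fderiv ℝ α z) (1,0)
  set a2 := (fderiv ℝ α z) (0,1)
  set b1 := (fderiv ℝ β z) (1,0)
  set b2 := (fderiv ℝ β z) (0,1)
  set f1 := (fderiv ℝ f z) (1,0)
  set f2 := (fderiv ℝ f z) (0,1)
  linear_combination
    (b2*f2 - cb^2*b2*f2 - cb^2*a1*f1 - sb*cb*a2*f1 - sb*cb*a1*f2 - sb^2*b2*f2 - sb^2*a2*f2) * pA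
    + (-(b2*f2) + ca^2*b2*f2 - ca^2*b1*f1 - sa*ca*b2*f1 - sa*ca*b1*f2) * pB
end

section
/- Assume in addition that ∂̂₊α + ∂̂₋β = 0 everywhere on Ω. Then for every twice continuously differentiable function f : Ω → ℝ, at every point of Ω the commutator relation ∂̂₊∂̂₋f − ∂̂₋∂̂₊f = tan(A)·(∂̂₊α)·(∂̂₊f − ∂̂₋f) holds (Proposition 3.1, commutator relation in the hodograph plane). -/
/-- The normalized directional derivative `∂̂₊g = -sin β · ∂g/∂u + cos β · ∂g/∂v`
along the `Γ₊` hodograph characteristics. -/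
noncomputable def hodDerivPlus (β g : ℝ × ℝ → ℝ) : ℝ × ℝ → ℝ :=
  fun z => -Real.sin (β z) * fderiv ℝ g z (1, 0) + Real.cos (β z) * fderiv ℝ g z (0, 1)

/-- The normalized directional derivative `∂̂₋g = sin α · ∂g/∂u - cos α · ∂g/∂v`
along the `Γ₋` hodograph characteristics. -/
noncomputable def hodDerivMinus (α g : ℝ × ℝ → ℝ) : ℝ × ℝ → ℝ :=
  fun z => Real.sin (α z) * fderiv ℝ g z (1, 0) - Real.cos (α z) * fderiv ℝ g z (0, 1)

lemma trig_hc (a b : ℝ) (h : Real.cos ((a - b) / 2) ≠ 0) :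
    Real.cos a - Real.cos b = -Real.tan ((a - b) / 2) * (Real.sin a + Real.sin b) := by
  have e1 := Real.sin_add ((a + b) / 2) ((a - b) / 2)
  have e2 := Real.cos_add ((a + b) / 2) ((a - b) / 2)
  have e3 := Real.sin_sub ((a + b) / 2) ((a - b) / 2)
  have e4 := Real.cos_sub ((a + b) / 2) ((a - b) / 2)
  rw [show (a + b) / 2 + (a - b) / 2 = a by ring] at e1 e2
  rw [show (a + b) / 2 - (a - b) / 2 = b by ring] at e3 e4
  rw [Real.tan_eq_sin_div_cos, e1, e2, e3, e4]
  field_simp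
  ring

lemma trig_hs (a b : ℝ) (h : Real.cos ((a - b) / 2) ≠ 0) :
    Real.sin a - Real.sin b = Real.tan ((a - b) / 2) * (Real.cos a + Real.cos b) := by
  have e1 := Real.sin_add ((a + b) / 2) ((a - b) / 2)
  have e2 := Real.cos_add ((a + b) / 2) ((a - b) / 2)
  have e3 := Real.sin_sub ((a + b) / 2) ((a - b) / 2)
  have e4 := Real.cos_sub ((a + b) / 2) ((a - b) / 2)
  rw [show (a + b) / 2 + (a - b) / 2 = a by ring] at e1 e2
  rw [show (a + b) / 2 - (a - b) / 2 = b by ring] at e3 e4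
  rw [Real.tan_eq_sin_div_cos, e1, e2, e3, e4]
  field_simp
  ring

theorem statement_19 (Ω : Set (ℝ × ℝ)) (hΩ : IsOpen Ω)
    (α β : ℝ × ℝ → ℝ)
    (hα : ContDiffOn ℝ 1 α Ω) (hβ : ContDiffOn ℝ 1 β Ω)
    (hsin : ∀ z ∈ Ω, Real.sin (α z - β z) ≠ 0)
    (hsys : ∀ z ∈ Ω, hodDerivPlus β α z + hodDerivMinus α β z = 0)
    (f : ℝ × ℝ → ℝ) (hf : ContDiffOn ℝ 2 f Ω) :
    ∀ z ∈ Ω,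
      hodDerivPlus β (hodDerivMinus α f) z - hodDerivMinus α (hodDerivPlus β f) z =
        Real.tan ((α z - β z) / 2) * hodDerivPlus β α z *
          (hodDerivPlus β f z - hodDerivMinus α f z) := by
  intro z hz
  have hzn : Ω ∈ nhds z := hΩ.mem_nhds hz
  have hfz : ContDiffAt ℝ 2 f z := hf.contDiffAt hzn
  have hα' : HasFDerivAt α (fderiv ℝ α z) z :=
    ((hα.contDiffAt hzn).differentiableAt (by norm_num)).hasFDerivAt
  have hβ' : HasFDerivAt β (fderiv ℝ β z) z :=
    ((hβ.contDiffAt hzn).differentiableAt (by norm_num)).hasFDerivAt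
  have hff : HasFDerivAt (fderiv ℝ f) (fderiv ℝ (fderiv ℝ f) z) z :=
    ((hfz.fderiv_right (m := 1) (by norm_num)).differentiableAt (by norm_num)).hasFDerivAt
  set f'' := fderiv ℝ (fderiv ℝ f) z with hf''def
  -- symmetry of the second derivative
  have hev : ∀ᶠ y in nhds z, HasFDerivAt f (fderiv ℝ f y) y := by
    filter_upwards [hfz.eventually (by norm_num)] with y hy
    exact (hy.differentiableAt (by norm_num)).hasFDerivAt
  have hsym : f'' ((1:ℝ), (0:ℝ)) ((0:ℝ), (1:ℝ)) = f'' ((0:ℝ), (1:ℝ)) ((1:ℝ), (0:ℝ)) :=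
    second_derivative_symmetric_of_eventually hev hff _ _
  -- derivatives of the partial derivatives of f
  have h10 : HasFDerivAt (fun w => fderiv ℝ f w ((1:ℝ), (0:ℝ)))
      ((fderiv ℝ f z).comp 0 + f''.flip (1, 0)) z :=
    hff.clm_apply (hasFDerivAt_const _ _)
  have h01 : HasFDerivAt (fun w => fderiv ℝ f w ((0:ℝ), (1:ℝ)))
      ((fderiv ℝ f z).comp 0 + f''.flip (0, 1)) z :=
    hff.clm_apply (hasFDerivAt_const _ _)
  -- derivatives of the trig coefficients
  have hsa : HasFDerivAt (fun w => Real.sin (α w)) (Real.cos (α z) • fderiv ℝ α z) z :=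
    (Real.hasDerivAt_sin (α z)).comp_hasFDerivAt z hα'
  have hca : HasFDerivAt (fun w => Real.cos (α w)) ((-Real.sin (α z)) • fderiv ℝ α z) z :=
    (Real.hasDerivAt_cos (α z)).comp_hasFDerivAt z hα'
  have hsb : HasFDerivAt (fun w => Real.sin (β w)) (Real.cos (β z) • fderiv ℝ β z) z :=
    (Real.hasDerivAt_sin (β z)).comp_hasFDerivAt z hβ'
  have hcb : HasFDerivAt (fun w => Real.cos (β w)) ((-Real.sin (β z)) • fderiv ℝ β z) z :=
    (Real.hasDerivAt_cos (β z)).comp_hasFDerivAt z hβ'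
  -- derivative of hodDerivMinus α f
  have hG : HasFDerivAt
      (fun w => Real.sin (α w) * fderiv ℝ f w (1, 0) - Real.cos (α w) * fderiv ℝ f w (0, 1))
      ((Real.sin (α z) • ((fderiv ℝ f z).comp 0 + f''.flip (1, 0)) +
          fderiv ℝ f z (1, 0) • (Real.cos (α z) • fderiv ℝ α z)) -
        (Real.cos (α z) • ((fderiv ℝ f z).comp 0 + f''.flip (0, 1)) +
          fderiv ℝ f z (0, 1) • ((-Real.sin (α z)) • fderiv ℝ α z))) z :=
    (hsa.mul h10).sub (hca.mul h01)
  -- derivative of hodDerivPlus β f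
  have hH : HasFDerivAt
      (fun w => -Real.sin (β w) * fderiv ℝ f w (1, 0) + Real.cos (β w) * fderiv ℝ f w (0, 1))
      (((-Real.sin (β z)) • ((fderiv ℝ f z).comp 0 + f''.flip (1, 0)) +
          fderiv ℝ f z (1, 0) • (-(Real.cos (β z) • fderiv ℝ β z))) +
        (Real.cos (β z) • ((fderiv ℝ f z).comp 0 + f''.flip (0, 1)) +
          fderiv ℝ f z (0, 1) • ((-Real.sin (β z)) • fderiv ℝ β z))) z :=
    ((hsb.neg.mul h10).add (hcb.mul h01))
  have hsys' := hsys z hz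
  simp only [hodDerivPlus, hodDerivMinus] at hsys' ⊢
  rw [show fderiv ℝ (hodDerivMinus α f) z = _ from hG.fderiv,
    show fderiv ℝ (hodDerivPlus β f) z = _ from hH.fderiv]
  -- trig facts
  have h2A : Real.sin (α z - β z) = 2 * Real.sin ((α z - β z) / 2) * Real.cos ((α z - β z) / 2) := by
    have h := Real.sin_two_mul ((α z - β z) / 2)
    rw [show 2 * ((α z - β z) / 2) = α z - β z by ring] at h
    exact h
  have hcosA : Real.cos ((α z - β z) / 2) ≠ 0 := by
    intro h
    exact hsin z hz (by rw [h2A, h]; ring)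
  have hc := trig_hc (α z) (β z) hcosA
  have hs := trig_hs (α z) (β z) hcosA
  simp only [ContinuousLinearMap.sub_apply, ContinuousLinearMap.add_apply,
    ContinuousLinearMap.smul_apply, ContinuousLinearMap.comp_apply,
    ContinuousLinearMap.zero_apply, ContinuousLinearMap.flip_apply, map_zero,
    ContinuousLinearMap.neg_apply, smul_eq_mul]
  linear_combination
    ((-Real.sin (β z) * fderiv ℝ α z (1, 0) + Real.cos (β z) * fderiv ℝ α z (0, 1)) *
        fderiv ℝ f z (1, 0)) * hc +
    ((-Real.sin (β z) * fderiv ℝ α z (1, 0) + Real.cos (β z) * fderiv ℝ α z (0, 1)) *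
        fderiv ℝ f z (0, 1)) * hs +
    (Real.cos (β z) * fderiv ℝ f z (1, 0) + Real.sin (β z) * fderiv ℝ f z (0, 1)) * hsys' +
    (Real.sin (β z) * Real.cos (α z) - Real.sin (α z) * Real.cos (β z)) * hsym
end
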